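/- arXiv:1610.00017 — 2 statements merged into one kernel-verified Lean document; each statement's English description precedes it below -/
import Mathlib

section
/- Let T > 0, let k₁ ≠ k₂ be integers, let a, b ∈ ℂ, and let t ∈ [0, T]. Then the deviation of the accumulated squared distance from its linear part is uniformly bounded: | ∫_0^t |a·e^{2πi k₁ s/T} + b·e^{2πi k₂ s/T}|² ds − (|a|² + |b|²)·t | ≤ 2·|a|·|b|·T/(π·|k₁ − k₂|). -/
/-!
Expanding the square, `‖a e^{iαs} + b e^{iβs}‖² = ‖a‖² + ‖b‖² + 2 Re (a b̄ e^{i(α-β)s})`: the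
linear part is exact and the deviation is the integral of a pure oscillation, which has modulus
at most `2 / |α - β|` over any interval. For carriers `k₁ ≠ k₂` the frequency gap is
`2π |k₁ - k₂| / T`.
-/

open Complex

open ComplexConjugate

theorem norm_sq_add_mul_exp_mul_I (a b : ℂ) (α β s : ℝ) :
    ‖a * exp (α * s * I) + b * exp (β * s * I)‖ ^ 2 =
      ‖a‖ ^ 2 + ‖b‖ ^ 2 + 2 * (a * conj b * exp (↑(α - β) * s * I)).re := by
  have hunit (x : ℝ) : normSq (exp (x * s * I)) = 1 := by
    rw [← Complex.sq_norm, ← ofReal_mul, norm_exp_ofReal_mul_I, one_pow]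
  have hcross : a * exp (α * s * I) * conj (b * exp (β * s * I)) =
      a * conj b * exp (↑(α - β) * s * I) := by
    rw [map_mul, ← exp_conj, mul_mul_mul_comm, ← exp_add]
    simp only [map_mul, conj_ofReal, conj_I, ofReal_sub]
    ring_nf
  simp only [Complex.sq_norm, normSq_add, normSq_mul, hunit, hcross]
  ring

theorem norm_integral_exp_mul_I_le {ω : ℝ} (hω : ω ≠ 0) (t : ℝ) :
    ‖∫ s in (0 : ℝ)..t, exp (ω * s * I)‖ ≤ 2 / |ω| := by
  have hc : (ω : ℂ) * I ≠ 0 := mul_ne_zero (ofReal_ne_zero.mpr hω) I_ne_zero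
  simp_rw [mul_right_comm _ _ I]
  rw [integral_exp_mul_complex hc, norm_div, norm_mul, norm_I, mul_one, norm_real,
    Real.norm_eq_abs, ofReal_zero, mul_zero, exp_zero]
  gcongr
  calc ‖exp (ω * I * t) - 1‖ ≤ ‖exp (ω * I * t)‖ + ‖(1 : ℂ)‖ := norm_sub_le _ _
    _ = 2 := by rw [mul_right_comm, ← ofReal_mul, norm_exp_ofReal_mul_I, norm_one]; norm_num

theorem integral_norm_sq_add_mul_exp_mul_I (a b : ℂ) (α β t : ℝ) :
    (∫ s in (0 : ℝ)..t, ‖a * exp (α * s * I) + b * exp (β * s * I)‖ ^ 2) =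
      (‖a‖ ^ 2 + ‖b‖ ^ 2) * t +
        2 * (a * conj b * ∫ s in (0 : ℝ)..t, exp (↑(α - β) * s * I)).re := by
  have hcross : Continuous fun s : ℝ => a * conj b * exp (↑(α - β) * s * I) := by fun_prop
  have hre : ∫ s in (0 : ℝ)..t, (a * conj b * exp (↑(α - β) * s * I)).re =
      (a * conj b * ∫ s in (0 : ℝ)..t, exp (↑(α - β) * s * I)).re := by
    rw [← intervalIntegral.integral_const_mul]
    exact reCLM.intervalIntegral_comp_comm (hcross.intervalIntegrable _ _)
  simp_rw [norm_sq_add_mul_exp_mul_I]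
  rw [intervalIntegral.integral_add intervalIntegrable_const
      (Continuous.intervalIntegrable (by fun_prop) _ _),
    intervalIntegral.integral_const, intervalIntegral.integral_const_mul, hre,
    smul_eq_mul, sub_zero, mul_comm t]

theorem abs_integral_norm_sq_add_mul_exp_mul_I_sub_le (a b : ℂ) {α β : ℝ} (h : α ≠ β) (t : ℝ) :
    |(∫ s in (0 : ℝ)..t, ‖a * exp (α * s * I) + b * exp (β * s * I)‖ ^ 2) -
      (‖a‖ ^ 2 + ‖b‖ ^ 2) * t| ≤ 4 * ‖a‖ * ‖b‖ / |α - β| := by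
  rw [integral_norm_sq_add_mul_exp_mul_I, add_sub_cancel_left]
  calc |2 * (a * conj b * ∫ s in (0 : ℝ)..t, exp (↑(α - β) * s * I)).re|
      ≤ 2 * (‖a * conj b‖ * ‖∫ s in (0 : ℝ)..t, exp (↑(α - β) * s * I)‖) := by
        rw [abs_mul, abs_two, ← norm_mul]; gcongr; exact abs_re_le_norm _
    _ ≤ 2 * (‖a‖ * ‖b‖ * (2 / |α - β|)) := by
        rw [norm_mul, norm_conj]
        gcongr
        exact norm_integral_exp_mul_I_le (sub_ne_zero.mpr h) t
    _ = 4 * ‖a‖ * ‖b‖ / |α - β| := by ring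

theorem ofdm_two_carrier_distance_linear_bound_general (T : ℝ) (hT : 0 < T) (k₁ k₂ : ℤ)
    (hk : k₁ ≠ k₂) (a b : ℂ) (t : ℝ) :
    |(∫ s in (0 : ℝ)..t,
        (‖a * Complex.exp (2 * Real.pi * Complex.I * (k₁ : ℂ) * (s : ℂ) / (T : ℂ)) +
          b * Complex.exp (2 * Real.pi * Complex.I * (k₂ : ℂ) * (s : ℂ) / (T : ℂ))‖) ^ 2) -
      (‖a‖ ^ 2 + ‖b‖ ^ 2) * t| ≤
    2 * ‖a‖ * ‖b‖ * T / (Real.pi * |(k₁ : ℝ) - (k₂ : ℝ)|) := by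
  have hphase (k : ℤ) (s : ℝ) : 2 * Real.pi * I * (k : ℂ) * (s : ℂ) / (T : ℂ) =
      ↑(2 * Real.pi * k / T) * s * I := by
    push_cast; ring
  have hfreq : 2 * Real.pi * k₁ / T ≠ 2 * Real.pi * k₂ / T := by
    rwa [Ne, div_left_inj' hT.ne', mul_right_inj' Real.two_pi_pos.ne', Int.cast_inj]
  simp_rw [hphase]
  refine (abs_integral_norm_sq_add_mul_exp_mul_I_sub_le a b hfreq t).trans_eq ?_
  rw [← sub_div, ← mul_sub, abs_div, abs_mul, abs_of_pos hT, abs_of_pos Real.two_pi_pos]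
  field_simp
  ring

/-- The accumulated squared distance between two-carrier OFDM signals deviates from
its linear part `(|a|²+|b|²)·t` by at most `2·|a|·|b|·T/(π·|k₁−k₂|)`, uniformly in
`t ∈ [0,T]`. -/
theorem ofdm_two_carrier_distance_linear_bound (T : ℝ) (hT : 0 < T) (k₁ k₂ : ℤ)
    (hk : k₁ ≠ k₂) (a b : ℂ) (t : ℝ) (ht : t ∈ Set.Icc 0 T) :
    |(∫ s in (0 : ℝ)..t,
        (‖a * Complex.exp (2 * Real.pi * Complex.I * (k₁ : ℂ) * (s : ℂ) / (T : ℂ)) +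
          b * Complex.exp (2 * Real.pi * Complex.I * (k₂ : ℂ) * (s : ℂ) / (T : ℂ))‖) ^ 2) -
      (‖a‖ ^ 2 + ‖b‖ ^ 2) * t| ≤
    2 * ‖a‖ * ‖b‖ * T / (Real.pi * |(k₁ : ℝ) - (k₂ : ℝ)|) :=
  ofdm_two_carrier_distance_linear_bound_general T hT k₁ k₂ hk a b t
end

section
/- Let n ≥ 1, T > 0 and 0 ≤ t ≤ T. Let X, X′ : Ω → (Fin n → ℂ) be random vectors on a probability space such that the 2n coordinate random variables X_1, …, X_n, X′_1, …, X′_n are mutually independent, each square-integrable with mean zero. Then the expected accumulated squared distance between the corresponding OFDM signals is exactly linear in t: E[ ∫_0^t | ∑_{k=1}^n (X_k − X′_k)·e^{2πi k s/T} |² ds ] = t · ∑_{k=1}^n E[ |X_k − X′_k|² ]. -/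
open MeasureTheory Complex ProbabilityTheory ComplexConjugate

/-!
Writing `Z_k = X_k − X'_k`, the squared distance at time `t` is the Hermitian form
`∑_{k,l} Z_k conj Z_l G_{kl}` with Gram matrix `G_{kl} = ∫_0^t e_k conj e_l` of the subcarriers.
Independence and zero means make the `Z_k` orthogonal in `L²(μ)`, so only the diagonal survives
in expectation, and `G_{kk} = t` because every subcarrier has modulus one.
-/

section

variable {Ω : Type*} [MeasurableSpace Ω] {μ : Measure Ω}

theorem ProbabilityTheory.IndepFun.integral_mul_conj_eq_zero {f g : Ω → ℂ}
    (h : IndepFun f g μ) (hf : AEStronglyMeasurable f μ) (hg : AEStronglyMeasurable g μ)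
    (hf₀ : ∫ ω, f ω ∂μ = 0) :
    ∫ ω, f ω * conj (g ω) ∂μ = 0 := by
  have hconj : IndepFun f (fun ω => conj (g ω)) μ :=
    h.comp measurable_id continuous_conj.measurable
  rw [hconj.integral_fun_mul_eq_mul_integral hf hg.star, hf₀, zero_mul]

theorem MeasureTheory.MemLp.integrable_mul_conj {f g : Ω → ℂ} (hf : MemLp f 2 μ)
    (hg : MemLp g 2 μ) :
    Integrable (fun ω => f ω * conj (g ω)) μ :=
  hf.integrable_mul hg.star

theorem integral_sub_mul_conj_sub {a b c d : Ω → ℂ} (ha : MemLp a 2 μ) (hb : MemLp b 2 μ)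
    (hc : MemLp c 2 μ) (hd : MemLp d 2 μ) :
    ∫ ω, (a ω - b ω) * conj (c ω - d ω) ∂μ =
      ∫ ω, a ω * conj (c ω) ∂μ - ∫ ω, a ω * conj (d ω) ∂μ
        - (∫ ω, b ω * conj (c ω) ∂μ - ∫ ω, b ω * conj (d ω) ∂μ) := by
  have hexpand : ∀ ω, (a ω - b ω) * conj (c ω - d ω) =
      a ω * conj (c ω) - a ω * conj (d ω) - (b ω * conj (c ω) - b ω * conj (d ω)) := by
    intro ω; rw [map_sub]; ring
  have hac := ha.integrable_mul_conj hc
  have had := ha.integrable_mul_conj hd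
  have hbc := hb.integrable_mul_conj hc
  have hbd := hb.integrable_mul_conj hd
  rw [integral_congr_ae (.of_forall hexpand), integral_sub, integral_sub hac had,
    integral_sub hbc hbd]
  exacts [hac.sub had, hbc.sub hbd]

theorem integral_mul_conj_self (f : Ω → ℂ) :
    ∫ ω, f ω * conj (f ω) ∂μ = ((∫ ω, ‖f ω‖ ^ 2 ∂μ : ℝ) : ℂ) := by
  simp_rw [mul_conj', ← ofReal_pow]
  exact integral_ofReal

theorem integral_sum_sum_mul_conj_mul_of_orthogonal {ι : Type*} [Fintype ι]
    {Z : ι → Ω → ℂ} (hZ : ∀ k, MemLp (Z k) 2 μ)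
    (horth : Pairwise fun k l => ∫ ω, Z k ω * conj (Z l ω) ∂μ = 0) (G : ι → ι → ℂ) :
    ∫ ω, ∑ k, ∑ l, Z k ω * conj (Z l ω) * G k l ∂μ =
      ∑ k, ((∫ ω, ‖Z k ω‖ ^ 2 ∂μ : ℝ) : ℂ) * G k k := by
  have hint : ∀ k l, Integrable (fun ω => Z k ω * conj (Z l ω) * G k l) μ :=
    fun k l => ((hZ k).integrable_mul_conj (hZ l)).mul_const _
  rw [integral_finsetSum _ fun k _ => integrable_finsetSum _ fun l _ => hint k l]
  refine Finset.sum_congr rfl fun k _ => ?_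
  rw [integral_finsetSum _ fun l _ => hint k l, Fintype.sum_eq_single k, integral_mul_const,
    integral_mul_conj_self]
  intro l hlk
  rw [integral_mul_const, horth (Ne.symm hlk), zero_mul]

end

theorem intervalIntegral_ofReal_norm_sum_mul_sq {ι : Type*} [Fintype ι] {e : ι → ℝ → ℂ}
    (he : ∀ k, Continuous (e k)) (c : ι → ℂ) (a b : ℝ) :
    ((∫ s in a..b, ‖∑ k, c k * e k s‖ ^ 2 : ℝ) : ℂ) =
      ∑ k, ∑ l, c k * conj (c l) * ∫ s in a..b, e k s * conj (e l s) := by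
  have hexpand : ∀ s, ((‖∑ k, c k * e k s‖ ^ 2 : ℝ) : ℂ) =
      ∑ k, ∑ l, c k * conj (c l) * (e k s * conj (e l s)) := by
    intro s
    rw [ofReal_pow, ← mul_conj', map_sum, Finset.sum_mul_sum]
    refine Finset.sum_congr rfl fun k _ => Finset.sum_congr rfl fun l _ => ?_
    rw [map_mul]; ring
  have hcont : ∀ k l, Continuous fun s => c k * conj (c l) * (e k s * conj (e l s)) :=
    fun k l => continuous_const.mul ((he k).mul (continuous_conj.comp (he l)))
  rw [← intervalIntegral.integral_ofReal]
  simp_rw [hexpand]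
  rw [intervalIntegral.integral_finsetSum fun k _ =>
    (continuous_finsetSum _ fun l _ => hcont k l).intervalIntegrable a b]
  refine Finset.sum_congr rfl fun k _ => ?_
  rw [intervalIntegral.integral_finsetSum fun l _ => (hcont k l).intervalIntegrable a b]
  simp_rw [intervalIntegral.integral_const_mul]

theorem intervalIntegral_mul_conj_self_of_norm_eq_one {e : ℝ → ℂ} (he : ∀ s, ‖e s‖ = 1)
    (a b : ℝ) :
    ∫ s in a..b, e s * conj (e s) = b - a := by
  simp [mul_conj', he]

/-- Subcarrier `k : ℕ` is the paper's subcarrier `k + 1`, whose frequency is `(k + 1) / T`. -/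
noncomputable def ofdmCarrier (T : ℝ) (k : ℕ) (s : ℝ) : ℂ :=
  cexp (2 * Real.pi * I * ((k : ℂ) + 1) * s / T)

theorem continuous_ofdmCarrier (T : ℝ) (k : ℕ) : Continuous (ofdmCarrier T k) := by
  unfold ofdmCarrier; fun_prop

theorem norm_ofdmCarrier (T : ℝ) (k : ℕ) (s : ℝ) : ‖ofdmCarrier T k s‖ = 1 := by
  have : 2 * Real.pi * I * ((k : ℂ) + 1) * s / T =
      ((2 * Real.pi * (k + 1) * s / T : ℝ) : ℂ) * I := by
    push_cast; ring
  rw [ofdmCarrier, this, norm_exp_ofReal_mul_I]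

theorem ofdm_random_coding_expected_distance_linear_general
    (n : ℕ) (T : ℝ) (t : ℝ)
    {Ω : Type*} [MeasurableSpace Ω] (μ : Measure Ω)
    (X X' : Ω → Fin n → ℂ)
    (hindep : ProbabilityTheory.iIndepFun
      (Sum.elim (fun k ω => X ω k) (fun k ω => X' ω k)) μ)
    (hL2 : ∀ i : Fin n ⊕ Fin n,
      MemLp (Sum.elim (fun k ω => X ω k) (fun k ω => X' ω k) i) 2 μ)
    (hmean : ∀ i : Fin n ⊕ Fin n,
      ∫ ω, Sum.elim (fun k ω => X ω k) (fun k ω => X' ω k) i ω ∂μ = 0) :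
    (∫ ω, (∫ s in (0 : ℝ)..t,
        (‖∑ k : Fin n, (X ω k - X' ω k) *
          Complex.exp (2 * Real.pi * Complex.I * ((k : ℕ) + 1 : ℂ) * (s : ℂ) / (T : ℂ))‖) ^ 2)
      ∂μ) =
    t * ∑ k : Fin n, ∫ ω, (‖X ω k - X' ω k‖) ^ 2 ∂μ := by
  have hcoord : Pairwise fun i j =>
      ∫ ω, Sum.elim (fun k ω => X ω k) (fun k ω => X' ω k) i ω *
        conj (Sum.elim (fun k ω => X ω k) (fun k ω => X' ω k) j ω) ∂μ = 0 := fun i j hij =>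
    (hindep.indepFun hij).integral_mul_conj_eq_zero (hL2 i).1 (hL2 j).1 (hmean i)
  have horth : Pairwise fun k l =>
      ∫ ω, (X ω k - X' ω k) * conj (X ω l - X' ω l) ∂μ = 0 := by
    intro k l hkl
    refine (integral_sub_mul_conj_sub (hL2 (.inl k)) (hL2 (.inr k)) (hL2 (.inl l))
      (hL2 (.inr l))).trans ?_
    rw [hcoord (by simpa), hcoord Sum.inl_ne_inr, hcoord Sum.inr_ne_inl, hcoord (by simpa),
      sub_zero, sub_self]
  have hZ : ∀ k, MemLp (fun ω => X ω k - X' ω k) 2 μ := fun k =>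
    (hL2 (.inl k)).sub (hL2 (.inr k))
  apply ofReal_injective
  calc _ = ∫ ω, ∑ k, ∑ l, (X ω k - X' ω k) * conj (X ω l - X' ω l) *
        (∫ s in (0 : ℝ)..t, ofdmCarrier T k s * conj (ofdmCarrier T l s)) ∂μ := by
        rw [← integral_complex_ofReal]
        congr with ω
        exact intervalIntegral_ofReal_norm_sum_mul_sq
          (fun k : Fin n => continuous_ofdmCarrier T k) (fun k => X ω k - X' ω k) 0 t
    _ = ∑ k, ((∫ ω, ‖X ω k - X' ω k‖ ^ 2 ∂μ : ℝ) : ℂ) * t := by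
        rw [integral_sum_sum_mul_conj_mul_of_orthogonal hZ horth]
        refine Finset.sum_congr rfl fun k _ => ?_
        rw [intervalIntegral_mul_conj_self_of_norm_eq_one (norm_ofdmCarrier T k), ofReal_zero,
          sub_zero]
    _ = _ := by push_cast; rw [Finset.mul_sum]; simp_rw [mul_comm]

/-- Random coding linearizes OFDM distances: if the `2n` coordinates of the random
codewords `X, X′ : Ω → ℂⁿ` are mutually independent, square-integrable and mean zero,
then the expected accumulated squared distance between the corresponding OFDM signals
is exactly linear in `t`:
`E[∫_0^t |∑_k (X_k − X′_k)·e^{2πiks/T}|² ds] = t·∑_k E[|X_k − X′_k|²]`. -/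
theorem ofdm_random_coding_expected_distance_linear
    (n : ℕ) (hn : 1 ≤ n) (T : ℝ) (hT : 0 < T) (t : ℝ) (ht : t ∈ Set.Icc 0 T)
    {Ω : Type*} [MeasurableSpace Ω] (μ : Measure Ω) [IsProbabilityMeasure μ]
    (X X' : Ω → Fin n → ℂ)
    (hindep : ProbabilityTheory.iIndepFun
      (Sum.elim (fun k ω => X ω k) (fun k ω => X' ω k)) μ)
    (hL2 : ∀ i : Fin n ⊕ Fin n,
      MemLp (Sum.elim (fun k ω => X ω k) (fun k ω => X' ω k) i) 2 μ)
    (hmean : ∀ i : Fin n ⊕ Fin n,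
      ∫ ω, Sum.elim (fun k ω => X ω k) (fun k ω => X' ω k) i ω ∂μ = 0) :
    (∫ ω, (∫ s in (0 : ℝ)..t,
        (‖∑ k : Fin n, (X ω k - X' ω k) *
          Complex.exp (2 * Real.pi * Complex.I * ((k : ℕ) + 1 : ℂ) * (s : ℂ) / (T : ℂ))‖) ^ 2)
      ∂μ) =
    t * ∑ k : Fin n, ∫ ω, (‖X ω k - X' ω k‖) ^ 2 ∂μ :=
  ofdm_random_coding_expected_distance_linear_general n T t μ X X' hindep hL2 hmean
end
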